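/- arXiv:2108.10859 — 3 statements merged into one kernel-verified Lean document; each statement's English description precedes it below -/
import Mathlib

section
/- Let f : ℝ → ℝ be L-Lipschitz continuous (L > 0) on [x_l, x_r] with x_l < x_r, and let x_m = (x_r + x_l + (f(x_l) - f(x_r))/L)/2. Suppose s_m := (f(x_r) + f(x_l) - L(x_r - x_l))/2 ≤ m where m is a lower bound with m ≤ f(y) attained somewhere, i.e., m = min over [0,1] of f. Then f(x_m) - m ≤ 2L·min(x_m - x_l, x_r - x_m). -/
/-!
The Piyavskii–Shubert point `x_m` is where the two lower cones `f x_l - L (x - x_l)` and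
`f x_r - L (x_r - x)` meet, and the score `s_m` is their common value there. The upper cones
through the same endpoints give `f x_m ≤ f x_l + L (x_m - x_l)` and
`f x_m ≤ f x_r + L (x_r - x_m)`, so `f x_m` exceeds `s_m ≤ m` by at most `2 L` times
either distance.
-/

noncomputable section

namespace Piyavskii

def point (L xl xr yl yr : ℝ) : ℝ := (xr + xl + (yl - yr) / L) / 2

def score (L xl xr yl yr : ℝ) : ℝ := (yr + yl - L * (xr - xl)) / 2

variable {L xl xr yl yr : ℝ}

theorem sub_mul_point_sub_left (hL : L ≠ 0) :
    yl - L * (point L xl xr yl yr - xl) = score L xl xr yl yr := by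
  unfold point score
  field_simp
  ring

theorem sub_mul_right_sub_point (hL : L ≠ 0) :
    yr - L * (xr - point L xl xr yl yr) = score L xl xr yl yr := by
  unfold point score
  field_simp
  ring

theorem point_mem_Icc (hL : 0 < L) (h : |yl - yr| ≤ L * (xr - xl)) :
    point L xl xr yl yr ∈ Set.Icc xl xr := by
  have h' : |(yl - yr) / L| ≤ xr - xl := by
    rwa [abs_div, abs_of_pos hL, div_le_iff₀' hL]
  obtain ⟨hlo, hhi⟩ := abs_le.mp h'
  constructor <;> unfold point <;> linarith

theorem sub_score_le_two_mul_min (hL : 0 < L) {v m : ℝ}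
    (hvl : v ≤ yl + L * (point L xl xr yl yr - xl))
    (hvr : v ≤ yr + L * (xr - point L xl xr yl yr))
    (hm : score L xl xr yl yr ≤ m) :
    v - m ≤ 2 * L * min (point L xl xr yl yr - xl) (xr - point L xl xr yl yr) := by
  have hsl : yl - L * (point L xl xr yl yr - xl) = score L xl xr yl yr :=
    sub_mul_point_sub_left hL.ne'
  have hsr : yr - L * (xr - point L xl xr yl yr) = score L xl xr yl yr :=
    sub_mul_right_sub_point hL.ne'
  rw [mul_min_of_nonneg _ _ (by positivity), le_min_iff]
  constructor <;> linarith

end Piyavskii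

end

theorem le_add_mul_of_abs_sub_le {u v a b L : ℝ} (h : |u - v| ≤ L * |a - b|) (hba : b ≤ a) :
    u ≤ v + L * (a - b) := by
  rw [abs_of_nonneg (sub_nonneg.mpr hba)] at h
  linarith [le_abs_self (u - v)]

theorem stmt2_general (f : ℝ → ℝ) (L : ℝ) (hL : 0 < L)
    (x_l x_r : ℝ) (hlr : x_l < x_r)
    (hl : x_l ∈ Set.Icc (0:ℝ) 1) (hr : x_r ∈ Set.Icc (0:ℝ) 1)
    (hf : ∀ a ∈ Set.Icc (0:ℝ) 1, ∀ b ∈ Set.Icc (0:ℝ) 1, |f a - f b| ≤ L * |a - b|)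
    (x_m : ℝ) (hm : x_m = (x_r + x_l + (f x_l - f x_r) / L) / 2)
    (m : ℝ)
    (hs : (f x_r + f x_l - L * (x_r - x_l)) / 2 ≤ m) :
    f x_m - m ≤ 2 * L * min (x_m - x_l) (x_r - x_m) := by
  change x_m = Piyavskii.point L x_l x_r (f x_l) (f x_r) at hm
  have hlr' : |f x_l - f x_r| ≤ L * (x_r - x_l) := by
    simpa [abs_sub_comm x_l, abs_of_pos (sub_pos.mpr hlr)] using hf x_l hl x_r hr
  have ⟨hml, hmr⟩ : x_m ∈ Set.Icc x_l x_r := hm ▸ Piyavskii.point_mem_Icc hL hlr'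
  have hm01 : x_m ∈ Set.Icc (0:ℝ) 1 := ⟨hl.1.trans hml, hmr.trans hr.2⟩
  subst hm
  refine Piyavskii.sub_score_le_two_mul_min hL ?_ ?_ hs
  · exact le_add_mul_of_abs_sub_le (hf _ hm01 x_l hl) hml
  · exact le_add_mul_of_abs_sub_le (abs_sub_comm _ x_r ▸ hf _ hm01 x_r hr) hmr

theorem stmt2 (f : ℝ → ℝ) (L : ℝ) (hL : 0 < L)
    (x_l x_r : ℝ) (hlr : x_l < x_r)
    (hl : x_l ∈ Set.Icc (0:ℝ) 1) (hr : x_r ∈ Set.Icc (0:ℝ) 1)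
    (hf : ∀ a ∈ Set.Icc (0:ℝ) 1, ∀ b ∈ Set.Icc (0:ℝ) 1, |f a - f b| ≤ L * |a - b|)
    (x_m : ℝ) (hm : x_m = (x_r + x_l + (f x_l - f x_r) / L) / 2)
    (m : ℝ) (hmin : ∀ y ∈ Set.Icc (0:ℝ) 1, m ≤ f y)
    (hatt : ∃ y ∈ Set.Icc (0:ℝ) 1, f y = m)
    (hs : (f x_r + f x_l - L * (x_r - x_l)) / 2 ≤ m) :
    f x_m - m ≤ 2 * L * min (x_m - x_l) (x_r - x_m) :=
  stmt2_general f L hL x_l x_r hlr hl hr hf x_m hm m hs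
end

section
/- For all real x with 0 < x ≤ 1/2 and all real p ≥ 1: (1 - (1-2x)^p) / (1 - (1-x)^p) ≤ 2. -/
/-
Convexity of t ↦ t ^ p at the midpoint 1 - x of 1 - 2x and 1 gives 2 (1 - x) ^ p ≤ (1 - 2x) ^ p + 1,
which is the claim once the positive denominator is cleared.
-/

theorem Real.two_mul_midpoint_rpow_le {a b p : ℝ} (ha : 0 ≤ a) (hb : 0 ≤ b) (hp : 1 ≤ p) :
    2 * ((a + b) / 2) ^ p ≤ a ^ p + b ^ p := by
  have hconv := (convexOn_rpow hp).2 (Set.mem_Ici.2 ha) (Set.mem_Ici.2 hb)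
    (by norm_num : (0 : ℝ) ≤ 1 / 2) (by norm_num : (0 : ℝ) ≤ 1 / 2) (by norm_num)
  simp only [smul_eq_mul] at hconv
  rw [show 1 / 2 * a + 1 / 2 * b = (a + b) / 2 by ring] at hconv
  linarith

theorem stmt7 (x p : ℝ) (hx0 : 0 < x) (hx1 : x ≤ 1 / 2) (hp : 1 ≤ p) :
    (1 - (1 - 2 * x) ^ p) / (1 - (1 - x) ^ p) ≤ 2 := by
  have hden : (1 - x) ^ p < 1 := Real.rpow_lt_one (by linarith) (by linarith) (by linarith)
  have hconv := Real.two_mul_midpoint_rpow_le (by linarith : 0 ≤ 1 - 2 * x) zero_le_one hp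
  rw [show (1 - 2 * x + 1) / 2 = 1 - x by ring, Real.one_rpow] at hconv
  rw [div_le_iff₀ (by linarith)]
  linarith
end

section
/- For all real x with 0 < x ≤ 1/2 and all real p ≥ 1: x^p / (1 - (1-x)^p) ≤ 2^{-p} / (1 - 2^{-p}). -/
/-! Clearing denominators and using `x ^ p · 2⁻ᵖ = (x / 2) ^ p`, the claim becomes
`x ^ p + ((1 - x) / 2) ^ p ≤ (1 / 2) ^ p + (x / 2) ^ p`. Both pairs have the same sum, and
`x / 2 ≤ x, (1 - x) / 2 ≤ 1 / 2` when `x ≤ 1 / 2`, so this is the two-point majorization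
inequality for the convex function `t ↦ t ^ p`. -/

theorem ConvexOn.map_add_map_le_of_add_eq {𝕜 β : Type*} [Field 𝕜] [LinearOrder 𝕜]
    [IsStrictOrderedRing 𝕜] [AddCommGroup β] [PartialOrder β] [IsOrderedAddMonoid β]
    [Module 𝕜 β] {s : Set 𝕜} {f : 𝕜 → β} (hf : ConvexOn 𝕜 s f) {a b c d : 𝕜}
    (ha : a ∈ s) (hb : b ∈ s) (hac : a ≤ c) (hcb : c ≤ b) (hcd : c + d = a + b) :
    f c + f d ≤ f a + f b := by
  rcases hac.lt_or_eq.symm with rfl | hac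
  · obtain rfl : d = b := by linear_combination hcd
    rw [add_comm]
  have hab : 0 < b - a := by linarith
  set t := (b - c) / (b - a)
  have ht0 : 0 ≤ t := div_nonneg (by linarith) hab.le
  have ht1 : 0 ≤ 1 - t := by rw [sub_nonneg, div_le_one hab]; linarith
  have hc : t • a + (1 - t) • b = c := by simp only [t, smul_eq_mul]; field_simp; ring
  have hd : (1 - t) • a + t • b = d := by
    simp only [t, smul_eq_mul]; field_simp; linear_combination (a - b) * hcd
  have hfc := hf.2 ha hb ht0 ht1 (add_sub_cancel t 1)
  have hfd := hf.2 ha hb ht1 ht0 (sub_add_cancel 1 t)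
  rw [hc] at hfc
  rw [hd] at hfd
  calc f c + f d ≤ (t • f a + (1 - t) • f b) + ((1 - t) • f a + t • f b) := add_le_add hfc hfd
    _ = f a + f b := by module

namespace Real

theorem rpow_add_rpow_half_one_sub_le {x p : ℝ} (hx0 : 0 ≤ x) (hx1 : x ≤ 2⁻¹) (hp : 1 ≤ p) :
    x ^ p + ((1 - x) / 2) ^ p ≤ 2⁻¹ ^ p + (x / 2) ^ p := by
  rw [add_comm (2⁻¹ ^ p)]
  exact (convexOn_rpow hp).map_add_map_le_of_add_eq (Set.mem_Ici.2 (by positivity))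
    (by norm_num) (by linarith) (by linarith) (by ring)

end Real

theorem stmt8 (x p : ℝ) (hx0 : 0 < x) (hx1 : x ≤ 1 / 2) (hp : 1 ≤ p) :
    x ^ p / (1 - (1 - x) ^ p) ≤ (2:ℝ) ^ (-p) / (1 - (2:ℝ) ^ (-p)) := by
  have hp0 : 0 < p := by linarith
  have hden_x : 0 < 1 - (1 - x) ^ p :=
    sub_pos.2 (Real.rpow_lt_one (by linarith) (by linarith) hp0)
  have hden_half : 0 < 1 - (2⁻¹ : ℝ) ^ p :=
    sub_pos.2 (Real.rpow_lt_one (by norm_num) (by norm_num) hp0)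
  have hx_half : x ^ p * 2⁻¹ ^ p = (x / 2) ^ p := by
    rw [← Real.mul_rpow hx0.le (by norm_num), div_eq_mul_inv]
  have hy_half : (1 - x) ^ p * 2⁻¹ ^ p = ((1 - x) / 2) ^ p := by
    rw [← Real.mul_rpow (by linarith) (by norm_num), div_eq_mul_inv]
  rw [Real.rpow_neg_eq_inv_rpow, div_le_div_iff₀ hden_x hden_half]
  linarith [Real.rpow_add_rpow_half_one_sub_le hx0.le (by linarith) hp]
end
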